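/- Let G be a group with finite symmetric generating set S, y a central element of G, and α : G → ℂ a harmonic function such that the function x ↦ α(x y⁻¹) - α(x) lies in ℓ^p(G) for some 1 ≤ p < ∞. Then α(x y⁻¹) = α(x) for all x ∈ G, i.e., α is invariant under right translation by y. -/

import Mathlib

/-!
Since `y` is central, right translation by `y⁻¹` commutes with the Laplacian, so
`β x = α (x * y⁻¹) - α x` is again harmonic. Being in `ℓ^p`, `β` tends to `0` at infinity, so `‖β‖`
attains its maximum; by the maximum principle on the connected Cayley graph `β` is then constant.
A nonzero constant is in `ℓ^p` only on a finite group, and there `∑ₓ β x = 0` by translation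
invariance of the sum, so the constant is `0`.
-/

open Filter Finset Topology

section Averaging

variable {ι E : Type*} [NormedAddCommGroup E] [NormedSpace ℝ E] [StrictConvexSpace ℝ E]

theorem eq_of_norm_le_of_sum_sub_eq_zero {s : Finset ι} {z : ι → E} {u : E}
    (hz : ∀ i ∈ s, ‖z i‖ ≤ ‖u‖) (hsum : ∑ i ∈ s, (z i - u) = 0) : ∀ i ∈ s, z i = u := by
  -- `u` is the average of the `z i`, and in a strictly convex space a nonconstant average of
  -- vectors in the ball of radius `‖u‖` lies in the open ball.
  by_contra! ⟨i, hi, hne⟩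
  have hcard : (#s : ℝ) ≠ 0 := Nat.cast_ne_zero.2 (card_ne_zero_of_mem hi)
  have havg : ∑ k ∈ s, (#s : ℝ)⁻¹ • z k = u := by
    rw [sum_sub_distrib, sum_const, sub_eq_zero, ← Nat.cast_smul_eq_nsmul ℝ] at hsum
    rw [← smul_sum, hsum, inv_smul_smul₀ hcard]
  obtain ⟨j, hj, hij⟩ : ∃ j ∈ s, z i ≠ z j := by
    by_contra! hall
    refine hne ?_
    rw [← havg, sum_congr rfl fun k hk => by rw [← hall k hk], sum_const,
      ← Nat.cast_smul_eq_nsmul ℝ, smul_smul, mul_inv_cancel₀ hcard, one_smul]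
  have hw : (#s : ℝ)⁻¹ ≠ 0 := inv_ne_zero hcard
  have hlt := norm_sum_lt_of_strictConvexSpace (fun _ _ => inv_nonneg.2 (Nat.cast_nonneg _))
    (by rw [sum_const, nsmul_eq_mul, mul_inv_cancel₀ hcard]) hi hj hij hw hw hz
  rw [havg] at hlt
  exact lt_irrefl _ hlt

end Averaging

def IsHarmonic {G E : Type*} [Group G] [AddCommGroup E] (S : Finset G) (f : G → E) : Prop :=
  ∀ x, ∑ g ∈ S, (f (x * g⁻¹) - f x) = 0

namespace IsHarmonic

variable {G E : Type*} [Group G] {S : Finset G}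

section AddCommGroup

variable [AddCommGroup E] {f f' : G → E}

theorem sub (hf : IsHarmonic S f) (hf' : IsHarmonic S f') : IsHarmonic S (f - f') := fun x => by
  simp only [Pi.sub_apply, sub_sub_sub_comm, sum_sub_distrib, hf x, hf' x, sub_zero]

theorem comp_mul_right (hf : IsHarmonic S f) {y : G} (hy : y ∈ Subgroup.center G) :
    IsHarmonic S (fun x => f (x * y)) := fun x => by
  simpa only [mul_assoc, (Subgroup.mem_center_iff.1 hy _).symm] using hf (x * y)

end AddCommGroup

variable [NormedAddCommGroup E] [NormedSpace ℝ E] [StrictConvexSpace ℝ E] {f : G → E}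

theorem eq_of_forall_norm_le (hf : IsHarmonic S f) (hsym : ∀ g ∈ S, g⁻¹ ∈ S)
    (hgen : Subgroup.closure (S : Set G) = ⊤) {m : G} (hm : ∀ x, ‖f x‖ ≤ ‖f m‖) :
    ∀ x, f x = f m := by
  have hstep : ∀ x, f x = f m → ∀ g ∈ S, f (x * g⁻¹) = f m := fun x hx g hg => by
    rw [← hx] at hm ⊢
    exact eq_of_norm_le_of_sum_sub_eq_zero (fun g _ => hm _) (hf x) g hg
  suffices h : ∀ z ∈ Subgroup.closure (S : Set G), f (m * z) = f m by
    intro x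
    simpa using h (m⁻¹ * x) (hgen ▸ Subgroup.mem_top _)
  intro z hz
  induction hz using Subgroup.closure_induction_right with
  | one => rw [mul_one]
  | mul_right z _ g hg ih => simpa [mul_assoc] using hstep _ ih g⁻¹ (hsym g hg)
  | mul_inv_cancel z _ g hg ih => rw [← mul_assoc]; exact hstep _ ih g hg

end IsHarmonic

theorem exists_forall_le_of_tendsto_cofinite_zero {α : Type*} [Nonempty α] {f : α → ℝ}
    (hf0 : ∀ a, 0 ≤ f a) (hf : Tendsto f cofinite (𝓝 0)) : ∃ a₀, ∀ a, f a ≤ f a₀ := by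
  by_cases hpos : ∃ a, 0 < f a
  · obtain ⟨a, ha⟩ := hpos
    have hfin : Set.Finite {x | f a ≤ f x} := by
      simpa [not_lt] using eventually_cofinite.1 (hf.eventually (eventually_lt_nhds ha))
    obtain ⟨m, hm, hmax⟩ := Set.exists_max_image _ f hfin ⟨a, le_refl (f a)⟩
    exact ⟨m, fun x => (le_total (f a) (f x)).elim (hmax x) fun h => h.trans hm⟩
  · push Not at hpos
    exact ⟨Classical.arbitrary α, fun x => (hpos x).trans (hf0 _)⟩

theorem eq_zero_of_forall_mul_right_sub_eq {G E : Type*} [Group G] [Finite G] [AddCommGroup E]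
    [IsAddTorsionFree E] {f : G → E} {y : G} {c : E} (hc : ∀ x, f (x * y) - f x = c) : c = 0 := by
  have := Fintype.ofFinite G
  have hsum : ∑ x, (f (x * y) - f x) = 0 := by
    rw [sum_sub_distrib, sub_eq_zero]
    exact Fintype.sum_equiv (Equiv.mulRight y) _ _ fun _ => rfl
  simp only [hc, sum_const, card_univ] at hsum
  exact (nsmul_eq_zero_iff_right Fintype.card_ne_zero).1 hsum

/-- If `α` is harmonic, `y` is central, and `x ↦ α (x y⁻¹) - α x` lies in
`ℓ^p(G)`, then `α` is invariant under right translation by `y`. -/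
theorem harmonic_translate_invariant {G : Type*} [Group G] (S : Finset G)
    (hsym : ∀ g ∈ S, g⁻¹ ∈ S) (hgen : Subgroup.closure (S : Set G) = ⊤)
    (y : G) (hy : y ∈ Subgroup.center G)
    (p : ℝ) (hp : 1 ≤ p) (α : G → ℂ)
    (hharm : ∀ x : G, ∑ g ∈ S, (α (x * g⁻¹) - α x) = 0)
    (hlp : Summable (fun x : G => ‖α (x * y⁻¹) - α x‖ ^ p)) :
    ∀ x : G, α (x * y⁻¹) = α x := by
  set β : G → ℂ := fun x => α (x * y⁻¹) - α x
  have hp0 : 0 < p := one_pos.trans_le hp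
  have hβ : IsHarmonic S β := (IsHarmonic.comp_mul_right hharm (inv_mem hy)).sub hharm
  obtain ⟨m, hm⟩ := exists_forall_le_of_tendsto_cofinite_zero (fun _ => by positivity)
    hlp.tendsto_cofinite_zero
  have hconst : ∀ x, β x = β m := hβ.eq_of_forall_norm_le hsym hgen fun x =>
    (Real.rpow_le_rpow_iff (norm_nonneg _) (norm_nonneg _) hp0).1 (hm x)
  have hm0 : β m = 0 := by
    rcases finite_or_infinite G with _ | _
    · exact eq_zero_of_forall_mul_right_sub_eq hconst
    · have hsum : Summable fun _ : G => ‖β m‖ ^ p :=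
        hlp.congr fun x => congrArg (‖·‖ ^ p) (hconst x)
      rw [summable_const_iff, Real.rpow_eq_zero (norm_nonneg _) hp0.ne', norm_eq_zero] at hsum
      exact hsum
  exact fun x => sub_eq_zero.1 ((hconst x).trans hm0)
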